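/- For every natural number n and all real numbers x, y, z: ∫_x^{x+z} ₍B₎E_n(v;y) dv = Σ_{j=0}^{n} ( z^{j+1} / (j+1)! ) · ( n! / (n−j)! ) · ₍B₎E_{n−j}(x;y). Equivalently, (1/(n+1)) · ( ₍B₎E_{n+1}(x+z;y) − ₍B₎E_{n+1}(x;y) ) equals that sum. -/

import Mathlib

open PowerSeries Finset

/-- The series `e^{x t}`. -/
noncomputable def expXT (x : ℝ) : PowerSeries ℝ :=
  PowerSeries.rescale x (PowerSeries.exp ℝ)

/-- The series `e^{y (e^t - 1)} = ∑_{k ≥ 0} y^k (e^t - 1)^k / k!`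
(the inner sum is finite in each coefficient since `(e^t - 1)^k` has order `≥ k`). -/
noncomputable def bellSeries (y : ℝ) : PowerSeries ℝ :=
  PowerSeries.mk fun n =>
    ∑ k ∈ Finset.range (n + 1),
      y ^ k * ((k.factorial : ℝ))⁻¹ * PowerSeries.coeff n ((PowerSeries.exp ℝ - 1) ^ k)

/-- The series `(2 / (e^t + 1))^α`. -/
noncomputable def eulerSeries (α : ℕ) : PowerSeries ℝ :=
  (2 * (PowerSeries.exp ℝ + 1)⁻¹) ^ α

/-- The Bell-based Euler polynomial `₍B₎E_n^(α)(x; y)`: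
`n!` times the coefficient of `t^n` in `(2/(e^t+1))^α e^{xt + y(e^t-1)}`. -/
noncomputable def bellEuler (α : ℕ) (x y : ℝ) (n : ℕ) : ℝ :=
  n.factorial * PowerSeries.coeff n (eulerSeries α * expXT x * bellSeries y)

/-!
Write `₍B₎E_n(x;y) = n! [tⁿ] F e^{xt}` with `F = (2/(eᵗ+1)) e^{y(eᵗ-1)}`. Then `e^{(x+z)t} = e^{zt} e^{xt}`
gives the addition formula `₍B₎E_N(x+z;y) = ∑ⱼ C(N,j) zʲ ₍B₎E_{N-j}(x;y)`. Both identities are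
read off it: the integrand, shifted to `v = x + h`, is a polynomial in `h` integrated term by term,
and in the difference the `j = 0` term cancels.
-/

open scoped Nat

noncomputable def appell (F : PowerSeries ℝ) (x : ℝ) (n : ℕ) : ℝ :=
  n ! * coeff n (F * expXT x)

lemma bellEuler_eq_appell (α : ℕ) (x y : ℝ) (n : ℕ) :
    bellEuler α x y n = appell (eulerSeries α * bellSeries y) x n := by
  rw [bellEuler, appell, mul_right_comm]

lemma coeff_expXT (x : ℝ) (n : ℕ) : coeff n (expXT x) = x ^ n / n ! := by
  simp [expXT, coeff_exp, div_eq_mul_inv]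

lemma expXT_add (x z : ℝ) : expXT (x + z) = expXT x * expXT z :=
  (exp_mul_exp_eq_exp_add x z).symm

lemma appell_add (F : PowerSeries ℝ) (x z : ℝ) (N : ℕ) :
    appell F (x + z) N =
      ∑ j ∈ range (N + 1), (N.choose j : ℝ) * z ^ j * appell F x (N - j) := by
  have hsplit : F * expXT (x + z) = expXT z * (F * expXT x) := by rw [expXT_add]; ring
  rw [appell, hsplit, coeff_mul, Nat.sum_antidiagonal_eq_sum_range_succ_mk, mul_sum]
  refine sum_congr rfl fun j hj => ?_
  rw [appell, coeff_expXT, Nat.cast_choose ℝ (Nat.lt_succ_iff.mp (mem_range.mp hj))]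
  field_simp

lemma integral_appell (F : PowerSeries ℝ) (x z : ℝ) (n : ℕ) :
    ∫ v in x..(x + z), appell F v n =
      ∑ j ∈ range (n + 1), (n.choose j : ℝ) * (z ^ (j + 1) / (j + 1)) * appell F x (n - j) := by
  have hshift := intervalIntegral.integral_comp_add_left (fun v => appell F v n) x (a := 0) (b := z)
  rw [add_zero] at hshift
  simp only [← hshift, appell_add]
  rw [intervalIntegral.integral_finsetSum fun j _ =>
    (by fun_prop : Continuous _).intervalIntegrable 0 z]
  refine sum_congr rfl fun j _ => ?_
  rw [intervalIntegral.integral_mul_const, intervalIntegral.integral_const_mul, integral_pow]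
  simp

lemma appell_succ_add_sub (F : PowerSeries ℝ) (x z : ℝ) (n : ℕ) :
    (1 / (n + 1) : ℝ) * (appell F (x + z) (n + 1) - appell F x (n + 1)) =
      ∑ j ∈ range (n + 1), (n.choose j : ℝ) * (z ^ (j + 1) / (j + 1)) * appell F x (n - j) := by
  rw [appell_add, sum_range_succ']
  simp only [Nat.choose_zero_right, Nat.cast_one, pow_zero, Nat.sub_zero, one_mul,
    Nat.add_sub_add_right, add_sub_cancel_right, mul_sum]
  refine sum_congr rfl fun j _ => ?_
  have hchoose : (n.choose j : ℝ) = (n + 1).choose (j + 1) * (j + 1) / (n + 1) := by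
    rw [eq_div_iff (by positivity), mul_comm]
    exact_mod_cast Nat.add_one_mul_choose_eq n j
  rw [hchoose]
  field_simp

lemma choose_mul_pow_div_eq {n j : ℕ} (hj : j ≤ n) (z : ℝ) :
    (n.choose j : ℝ) * (z ^ (j + 1) / (j + 1)) = z ^ (j + 1) / (j + 1)! * (n ! / (n - j)!) := by
  rw [Nat.cast_choose ℝ hj, Nat.factorial_succ]
  push_cast
  field_simp

theorem stmt11 (n : ℕ) (x y z : ℝ) :
    (∫ v in x..(x + z), bellEuler 1 v y n) =
        (∑ j ∈ Finset.range (n + 1),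
          z ^ (j + 1) / ((j + 1).factorial : ℝ) *
            ((n.factorial : ℝ) / ((n - j).factorial : ℝ)) * bellEuler 1 x y (n - j)) ∧
    (1 / (n + 1) : ℝ) * (bellEuler 1 (x + z) y (n + 1) - bellEuler 1 x y (n + 1)) =
        ∑ j ∈ Finset.range (n + 1),
          z ^ (j + 1) / ((j + 1).factorial : ℝ) *
            ((n.factorial : ℝ) / ((n - j).factorial : ℝ)) * bellEuler 1 x y (n - j) := by
  simp only [bellEuler_eq_appell]
  rw [integral_appell, appell_succ_add_sub, and_self]
  refine sum_congr rfl fun j hj => ?_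
  rw [choose_mul_pow_div_eq (Nat.lt_succ_iff.mp (mem_range.mp hj))]
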